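/- Fix β > 0, n ≥ 1, and real numbers a_1, …, a_n with a_i > 0 for every i, and define L(w) = (1/n) ∑_{i=1}^n −log σ(β w a_i) for w ∈ ℝ, where σ(z) = 1/(1 + exp(−z)). Then: (i) L(w) > 0 for every w ∈ ℝ; (ii) L(w) → 0 as w → +∞; and consequently (iii) the infimum of L over ℝ equals 0 and is not attained at any w ∈ ℝ. -/

import Mathlib

open Filter

noncomputable def logisticSigma (z : ℝ) : ℝ := 1 / (1 + Real.exp (-z))

theorem isGLB_range_of_le_of_tendsto {α γ : Type*} [Preorder γ] [TopologicalSpace γ]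
    [OrderClosedTopology γ] {l : Filter α} [l.NeBot] {f : α → γ} {c : γ}
    (hle : ∀ x, c ≤ f x) (hf : Tendsto f l (nhds c)) : IsGLB (Set.range f) c :=
  ⟨Set.forall_mem_range.mpr hle, fun _ hb => ge_of_tendsto' hf fun x => hb ⟨x, rfl⟩⟩

theorem neg_log_logisticSigma (z : ℝ) :
    -Real.log (logisticSigma z) = Real.log (1 + Real.exp (-z)) := by
  rw [logisticSigma, Real.log_div one_ne_zero (by positivity), Real.log_one, zero_sub, neg_neg]

theorem neg_log_logisticSigma_pos (z : ℝ) : 0 < -Real.log (logisticSigma z) := by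
  rw [neg_log_logisticSigma]
  exact Real.log_pos (lt_add_of_pos_right 1 (Real.exp_pos _))

theorem tendsto_neg_log_logisticSigma_atTop :
    Tendsto (fun z => -Real.log (logisticSigma z)) atTop (nhds 0) := by
  have hexp : Tendsto (fun z => 1 + Real.exp (-z)) atTop (nhds 1) := by
    simpa using (Real.tendsto_exp_neg_atTop_nhds_zero).const_add 1
  simpa only [neg_log_logisticSigma, Real.log_one] using hexp.log one_ne_zero

/-- For the empirical DPO loss restricted to the environment weight,
`L(w) = (1/n) ∑ᵢ −log σ(β w aᵢ)` with all `aᵢ > 0`: `L` is positive everywhere,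
tends to `0` as `w → +∞`, and hence its infimum over `ℝ` is `0` and is not attained. -/
theorem dpo_env_loss_pos_tendsto_zero_infimum_not_attained
    (β : ℝ) (hβ : 0 < β) (n : ℕ) (hn : 1 ≤ n) (a : Fin n → ℝ) (ha : ∀ i, 0 < a i)
    (L : ℝ → ℝ)
    (hL : L = fun w : ℝ => (1 / (n : ℝ)) * ∑ i, -Real.log (logisticSigma (β * w * a i))) :
    (∀ w : ℝ, 0 < L w) ∧
    Tendsto L atTop (nhds 0) ∧
    (IsGLB (Set.range L) 0 ∧ ∀ w : ℝ, L w ≠ 0) := by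
  subst hL
  have : Nonempty (Fin n) := Fin.pos_iff_nonempty.mp hn
  have hpos (w : ℝ) : 0 < (1 / (n : ℝ)) * ∑ i, -Real.log (logisticSigma (β * w * a i)) :=
    mul_pos (by positivity) <|
      Finset.sum_pos (fun i _ => neg_log_logisticSigma_pos _) Finset.univ_nonempty
  have hlim : Tendsto (fun w : ℝ => (1 / (n : ℝ)) * ∑ i, -Real.log (logisticSigma (β * w * a i)))
      atTop (nhds 0) := by
    have hterm (i : Fin n) :
        Tendsto (fun w : ℝ => -Real.log (logisticSigma (β * w * a i))) atTop (nhds 0) :=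
      tendsto_neg_log_logisticSigma_atTop.comp
        ((tendsto_id.const_mul_atTop hβ).atTop_mul_const (ha i))
    simpa using (tendsto_finsetSum Finset.univ fun i _ => hterm i).const_mul (1 / (n : ℝ))
  exact ⟨hpos, hlim, isGLB_range_of_le_of_tendsto (fun w => (hpos w).le) hlim,
    fun w => (hpos w).ne'⟩
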